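/- arXiv:1310.0407 — 4 statements merged into one kernel-verified Lean document; each statement's English description precedes it below -/
import Mathlib

section
/- Let a be an element of a C*-algebra A. Then there exists c ∈ A** with c c* c = a; indeed c = r(a)|a|^{1/3} satisfies this, and moreover if a ⊥ b in A then the corresponding elements c and d satisfy c ⊥ d. -/
/-- `|a| = (a* a)^{1/2}` via continuous functional calculus. -/
noncomputable def cAbs {M : Type*} [CStarAlgebra M] (a : M) : M :=
  cfc Real.sqrt (star a * a)

/-- A projection in a C*-algebra. -/
def IsProjE {M : Type*} [CStarAlgebra M] (p : M) : Prop :=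
  IsSelfAdjoint p ∧ p * p = p

/-- `p` is the support (range) projection of `x`. -/
def IsSupportProjOf {M : Type*} [CStarAlgebra M] (p x : M) : Prop :=
  IsProjE p ∧ p * x = x ∧ ∀ q, IsProjE q → q * x = x → p * q = p

/-- `u` is the range partial isometry of `a` from the polar decomposition `a = u|a|`. -/
def IsRangePI {M : Type*} [CStarAlgebra M] (u a : M) : Prop :=
  u * star u * u = u ∧ a = u * cAbs a ∧
    IsSupportProjOf (star u * u) (cAbs a) ∧ IsSupportProjOf (u * star u) (cAbs (star a))

/-- Orthogonality: `a ⊥ b` iff `a b* = 0` and `b* a = 0`. -/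
def Ortho {M : Type*} [Mul M] [Star M] [Zero M] (a b : M) : Prop :=
  a * star b = 0 ∧ star b * a = 0

/-!
Write `x = u|x|` and `z = |x|^{1/3}`. As `u* u` is the support projection of `|x|`, it fixes `z`,
so `(uz)(uz)*(uz) = u z³ = u|x| = x`. For orthogonality, `x e* = 0` gives `|x| |e| = 0` and
`e* x = 0` gives `|e| (v* u) |x| = 0`; both survive passing to cube roots, because a positive `y`
with `y w = 0` satisfies `y^r w = 0` for every `r > 0`: for `r = 2^{-n}` by the C*-identity, and
in general from `y^r = y^{r - 2^{-n}} y^{2^{-n}}`.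
-/

section RpowAnnihilator

variable {A : Type*} [CStarAlgebra A] [PartialOrder A] [StarOrderedRing A]

lemma cfc_rpow_mul_cfc_rpow {y : A} (hy : 0 ≤ y) {r s : ℝ} (hr : 0 ≤ r) (hs : 0 ≤ s) :
    cfc (fun t : ℝ ↦ t ^ r) y * cfc (fun t : ℝ ↦ t ^ s) y = cfc (fun t : ℝ ↦ t ^ (r + s)) y := by
  rw [← cfc_mul _ _ y (Real.continuous_rpow_const hr).continuousOn
    (Real.continuous_rpow_const hs).continuousOn]
  exact cfc_congr fun t ht ↦ (Real.rpow_add_of_nonneg (spectrum_nonneg_of_nonneg hy ht) hr hs).symm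

lemma cfc_rpow_one {y : A} (hy : 0 ≤ y) : cfc (fun t : ℝ ↦ t ^ (1 : ℝ)) y = y := by
  simp only [Real.rpow_one]
  exact cfc_id' ℝ y (IsSelfAdjoint.of_nonneg hy)

lemma cfc_rpow_mul_eq_zero {y w : A} (hy : 0 ≤ y) (h : y * w = 0) {r : ℝ} (hr : 0 < r) :
    cfc (fun t : ℝ ↦ t ^ r) y * w = 0 := by
  -- `‖y ^ (s / 2) * w‖² = ‖star w * y ^ s * w‖` by the C*-identity.
  have halve : ∀ s : ℝ, 0 ≤ s → cfc (fun t : ℝ ↦ t ^ s) y * w = 0 →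
      cfc (fun t : ℝ ↦ t ^ (s / 2)) y * w = 0 := by
    intro s hs hsw
    have hsq : cfc (fun t : ℝ ↦ t ^ (s / 2)) y * cfc (fun t : ℝ ↦ t ^ (s / 2)) y =
        cfc (fun t : ℝ ↦ t ^ s) y := by
      rw [cfc_rpow_mul_cfc_rpow hy (by positivity) (by positivity), add_halves]
    rw [← CStarRing.star_mul_self_eq_zero_iff, star_mul, IsSelfAdjoint.cfc.star_eq, mul_assoc,
      ← mul_assoc _ _ w, hsq, hsw, mul_zero]
  have pow_half : ∀ n : ℕ, cfc (fun t : ℝ ↦ t ^ ((1 / 2 : ℝ) ^ n)) y * w = 0 := by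
    intro n
    induction n with
    | zero => rwa [pow_zero, cfc_rpow_one hy]
    | succ n ih => simpa only [pow_succ, mul_one_div] using halve _ (by positivity) ih
  obtain ⟨n, hn⟩ := exists_pow_lt_of_lt_one hr (by norm_num : (1 / 2 : ℝ) < 1)
  calc cfc (fun t : ℝ ↦ t ^ r) y * w
      = cfc (fun t : ℝ ↦ t ^ (r - (1 / 2) ^ n)) y *
          (cfc (fun t : ℝ ↦ t ^ ((1 / 2 : ℝ) ^ n)) y * w) := by
        rw [← mul_assoc, cfc_rpow_mul_cfc_rpow hy (by linarith) (by positivity), sub_add_cancel]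
    _ = 0 := by rw [pow_half n, mul_zero]

lemma mul_cfc_rpow_eq_zero {y w : A} (hy : 0 ≤ y) (h : w * y = 0) {r : ℝ} (hr : 0 < r) :
    w * cfc (fun t : ℝ ↦ t ^ r) y = 0 := by
  have h' : y * star w = 0 := by
    simpa only [star_mul, (IsSelfAdjoint.of_nonneg hy).star_eq, star_zero] using congrArg star h
  simpa only [star_mul, star_star, IsSelfAdjoint.cfc.star_eq, star_zero]
    using congrArg star (cfc_rpow_mul_eq_zero hy h' hr)

lemma cfc_rpow_mul_mul_cfc_rpow_eq_zero {p q w : A} (hp : 0 ≤ p) (hq : 0 ≤ q)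
    (h : p * w * q = 0) {r s : ℝ} (hr : 0 < r) (hs : 0 < s) :
    cfc (fun t : ℝ ↦ t ^ r) p * w * cfc (fun t : ℝ ↦ t ^ s) q = 0 := by
  have hr' : cfc (fun t : ℝ ↦ t ^ r) p * (w * q) = 0 :=
    cfc_rpow_mul_eq_zero hp (by rwa [← mul_assoc]) hr
  exact mul_cfc_rpow_eq_zero hq (by rwa [← mul_assoc] at hr') hs

lemma mul_cfc_rpow_eq_self {y e : A} (hy : 0 ≤ y) (h : e * y = y) {r : ℝ} (hr : 0 < r) :
    e * cfc (fun t : ℝ ↦ t ^ r) y = cfc (fun t : ℝ ↦ t ^ r) y := by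
  have h' : (1 - e) * y = 0 := by rw [sub_mul, one_mul, h, sub_self]
  have hz := mul_cfc_rpow_eq_zero hy h' hr
  rwa [sub_mul, one_mul, sub_eq_zero, eq_comm] at hz

lemma cfc_cbrt_mul_self_mul_self {y : A} (hy : 0 ≤ y) :
    cfc (fun t : ℝ ↦ t ^ ((1 : ℝ) / 3)) y * cfc (fun t : ℝ ↦ t ^ ((1 : ℝ) / 3)) y *
      cfc (fun t : ℝ ↦ t ^ ((1 : ℝ) / 3)) y = y := by
  rw [cfc_rpow_mul_cfc_rpow hy (by norm_num) (by norm_num),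
    cfc_rpow_mul_cfc_rpow hy (by norm_num) (by norm_num),
    show (1 : ℝ) / 3 + 1 / 3 + 1 / 3 = 1 by norm_num, cfc_rpow_one hy]

end RpowAnnihilator

lemma cAbs_eq_cfc_rpow {M : Type*} [CStarAlgebra M] (x : M) :
    cAbs x = cfc (fun t : ℝ ↦ t ^ ((1 : ℝ) / 2)) (star x * x) :=
  cfc_congr fun t _ ↦ Real.sqrt_eq_rpow t

section PolarDecomposition

variable {M : Type*} [CStarAlgebra M] [PartialOrder M] [StarOrderedRing M]

lemma cAbs_nonneg (x : M) : 0 ≤ cAbs x :=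
  cfc_nonneg fun t _ ↦ Real.sqrt_nonneg t

lemma cAbs_mul_cAbs_eq_zero {x e : M} (h : x * star e = 0) : cAbs x * cAbs e = 0 := by
  have h' : star x * x * 1 * (star e * e) = 0 := by
    rw [mul_one, mul_assoc, ← mul_assoc x, h, zero_mul, mul_zero]
  simpa only [mul_one, ← cAbs_eq_cfc_rpow] using
    cfc_rpow_mul_mul_cfc_rpow_eq_zero (star_mul_self_nonneg x) (star_mul_self_nonneg e) h'
      one_half_pos one_half_pos

lemma IsRangePI.mul_star_mul_cbrt {u x : M} (hu : IsRangePI u x) :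
    u * cfc (fun t : ℝ ↦ t ^ ((1 : ℝ) / 3)) (cAbs x) *
      star (u * cfc (fun t : ℝ ↦ t ^ ((1 : ℝ) / 3)) (cAbs x)) *
      (u * cfc (fun t : ℝ ↦ t ^ ((1 : ℝ) / 3)) (cAbs x)) = x := by
  obtain ⟨-, hx, ⟨-, hsupp, -⟩, -⟩ := hu
  set z := cfc (fun t : ℝ ↦ t ^ ((1 : ℝ) / 3)) (cAbs x)
  have hz : star u * u * z = z := mul_cfc_rpow_eq_self (cAbs_nonneg x) hsupp (by norm_num)
  calc u * z * star (u * z) * (u * z) = u * (z * z * (star u * u * z)) := by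
        simp only [star_mul, IsSelfAdjoint.cfc.star_eq, z, mul_assoc]
    _ = x := by rw [hz, cfc_cbrt_mul_self_mul_self (cAbs_nonneg x), ← hx]

lemma IsRangePI.ortho_mul_cbrt {u v x e : M} (hu : IsRangePI u x) (hv : IsRangePI v e)
    (h : Ortho x e) :
    Ortho (u * cfc (fun t : ℝ ↦ t ^ ((1 : ℝ) / 3)) (cAbs x))
      (v * cfc (fun t : ℝ ↦ t ^ ((1 : ℝ) / 3)) (cAbs e)) := by
  obtain ⟨hxe, hex⟩ := h
  have third_pos : (0 : ℝ) < 1 / 3 := by norm_num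
  constructor
  · have hzz : cfc (fun t : ℝ ↦ t ^ ((1 : ℝ) / 3)) (cAbs x) *
        cfc (fun t : ℝ ↦ t ^ ((1 : ℝ) / 3)) (cAbs e) = 0 := by
      simpa only [mul_one] using cfc_rpow_mul_mul_cfc_rpow_eq_zero (cAbs_nonneg x)
        (cAbs_nonneg e) (w := 1) (by rw [mul_one, cAbs_mul_cAbs_eq_zero hxe]) third_pos third_pos
    rw [star_mul, IsSelfAdjoint.cfc.star_eq, mul_assoc, ← mul_assoc (cfc _ _), hzz, zero_mul,
      mul_zero]
  · have habs : cAbs e * (star v * u) * cAbs x = 0 := by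
      rw [hu.2.1, hv.2.1, star_mul, (cAbs_nonneg e).isSelfAdjoint.star_eq] at hex
      simpa only [mul_assoc] using hex
    simpa only [star_mul, IsSelfAdjoint.cfc.star_eq, mul_assoc] using
      cfc_rpow_mul_mul_cfc_rpow_eq_zero (cAbs_nonneg e) (cAbs_nonneg x) habs third_pos third_pos

end PolarDecomposition

lemma Ortho.map {A B F : Type*} [NonUnitalNonAssocSemiring A] [StarRing A]
    [NonUnitalNonAssocSemiring B] [StarRing B] [FunLike F A B] [NonUnitalRingHomClass F A B]
    [StarHomClass F A B] (f : F) {a b : A} (h : Ortho a b) : Ortho (f a) (f b) := by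
  obtain ⟨h₁, h₂⟩ := h
  exact ⟨by rw [← map_star, ← map_mul, h₁, map_zero],
    by rw [← map_star, ← map_mul, h₂, map_zero]⟩

theorem exists_cube_root_factor_general {A M : Type*} [NonUnitalCStarAlgebra A] [CStarAlgebra M]
    (ι : A →⋆ₙₐ[ℂ] M) (a b : A) (u v : M)
    (hu : IsRangePI u (ι a)) (hv : IsRangePI v (ι b)) :
    ∃ c d : M,
      c = u * cfc (fun t : ℝ => t ^ ((1 : ℝ) / 3)) (cAbs (ι a)) ∧
      d = v * cfc (fun t : ℝ => t ^ ((1 : ℝ) / 3)) (cAbs (ι b)) ∧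
      c * star c * c = ι a ∧ d * star d * d = ι b ∧
      (Ortho a b → Ortho c d) := by
  -- `M` carries no order instance; the spectral order makes `0 ≤ cAbs x` meaningful.
  let _ := CStarAlgebra.spectralOrder M
  have _ := CStarAlgebra.spectralOrderedRing M
  exact ⟨_, _, rfl, rfl, hu.mul_star_mul_cbrt, hv.mul_star_mul_cbrt,
    fun h ↦ hu.ortho_mul_cbrt hv (h.map ι)⟩

/-- for each `a` in a C*-algebra `A` there is `c` in the bidual
(here a unital C*-algebra `M` in which `A` embeds) with `c c* c = a`; indeed
`c = r(a)|a|^{1/3}` works, and if `a ⊥ b` then the corresponding elements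
`c = r(a)|a|^{1/3}` and `d = r(b)|b|^{1/3}` satisfy `c ⊥ d`. -/
theorem exists_cube_root_factor {A M : Type*} [NonUnitalCStarAlgebra A] [CStarAlgebra M]
    (ι : A →⋆ₙₐ[ℂ] M) (hι : Function.Injective ι) (a b : A) (u v : M)
    (hu : IsRangePI u (ι a)) (hv : IsRangePI v (ι b)) :
    ∃ c d : M,
      c = u * cfc (fun t : ℝ => t ^ ((1 : ℝ) / 3)) (cAbs (ι a)) ∧
      d = v * cfc (fun t : ℝ => t ^ ((1 : ℝ) / 3)) (cAbs (ι b)) ∧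
      c * star c * c = ι a ∧ d * star d * d = ι b ∧
      (Ortho a b → Ortho c d) :=
  exists_cube_root_factor_general ι a b u v hu hv
end

section
/- Let U, V be unital *-homomorphisms from a unital C*-algebra A into a unital C*-algebra B. If the pair (U, V) is orthogonality preserving on A_sa (i.e., a, b self-adjoint with ab = 0 implies U(a) V(b) = 0), then U = V. -/
/-!
Write `a = U x` and `b = V x` for a self-adjoint `x`. Since star homomorphisms commute with the
continuous functional calculus, orthogonality preservation gives `f(a) g(b) = 0` whenever
`f g = 0`. Feed this a staircase `g₀, …, g_m` of piecewise linear ramps of width one whose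
sum is an affine function of `t` on the spectra: `(1 - g_{k+1}) g_k = 0` forces
`g_k(b) ≤ g_{k+1}(a)`, and summing over `k` gives `a ≤ b + 1`. Rescaling yields `a ≤ b + ε` for
all `ε > 0`, hence `a ≤ b`; the condition is symmetric in `a` and `b`, so `a = b`.
-/

open Finset

def clamp01 (s : ℝ) : ℝ := max 0 (min 1 s)

@[fun_prop]
lemma continuous_clamp01 : Continuous clamp01 := by
  unfold clamp01; fun_prop

lemma clamp01_nonneg (s : ℝ) : 0 ≤ clamp01 s := le_max_left _ _

lemma clamp01_le_one (s : ℝ) : clamp01 s ≤ 1 := max_le zero_le_one (min_le_left _ _)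

lemma clamp01_of_one_le {s : ℝ} (h : 1 ≤ s) : clamp01 s = 1 := by
  rw [clamp01, min_eq_left h, max_eq_right zero_le_one]

lemma clamp01_of_nonpos {s : ℝ} (h : s ≤ 0) : clamp01 s = 0 :=
  max_eq_left <| (min_le_right _ _).trans h

lemma clamp01_of_mem_Icc {s : ℝ} (h0 : 0 ≤ s) (h1 : s ≤ 1) : clamp01 s = s := by
  rw [clamp01, min_eq_right h1, max_eq_right h0]

lemma sum_range_clamp01_sub (m : ℕ) {s : ℝ} (hs0 : 0 ≤ s) (hsm : s ≤ m) :
    ∑ k ∈ range (m + 1), clamp01 (k - s) = m - s := by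
  induction m with
  | zero =>
    obtain rfl : s = 0 := le_antisymm (by simpa using hsm) hs0
    simp [clamp01_of_nonpos]
  | succ m ih =>
    rw [sum_range_succ]
    rcases le_or_gt s m with hs | hs
    · rw [ih hs, clamp01_of_one_le (by push_cast; linarith)]
      push_cast; ring
    · have hzero : ∀ k ∈ range (m + 1), clamp01 (k - s) = 0 := fun k hk =>
        clamp01_of_nonpos <| by
          have : (k : ℝ) ≤ m := by exact_mod_cast Nat.lt_succ_iff.mp (mem_range.mp hk)
          linarith
      rw [sum_eq_zero hzero, zero_add, clamp01_of_mem_Icc (by push_cast at hsm ⊢; linarith)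
        (by push_cast; linarith)]

def stair (n k : ℕ) (t : ℝ) : ℝ := clamp01 (k - n - t)

@[fun_prop]
lemma continuous_stair (n k : ℕ) : Continuous (stair n k) := by
  unfold stair; fun_prop

lemma one_sub_stair_succ_mul_stair (n k : ℕ) (t : ℝ) :
    (1 - stair n (k + 1) t) * stair n k t = 0 := by
  simp only [stair]
  rcases le_or_gt ((k : ℝ) - n - t) 0 with h | h
  · rw [clamp01_of_nonpos h, mul_zero]
  · rw [clamp01_of_one_le (by push_cast; linarith), sub_self, zero_mul]

lemma sum_range_stair (n : ℕ) {t : ℝ} (ht : |t| ≤ n) :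
    ∑ k ∈ range (2 * n + 1), stair n k t = n - t := by
  rw [abs_le] at ht
  have := sum_range_clamp01_sub (2 * n) (s := t + n) (by linarith) (by push_cast; linarith)
  simp only [stair, sub_sub, add_comm (n : ℝ) t] at this ⊢
  rw [this]; push_cast; ring

lemma sum_range_cfc_stair {B : Type*} [CStarAlgebra B] {y : B} (hy : IsSelfAdjoint y) {n : ℕ}
    (hn : ‖y‖ ≤ n) :
    ∑ k ∈ range (2 * n + 1), cfc (stair n k) y = algebraMap ℝ B n - y := by
  nontriviality B
  rw [← cfc_sum _ y _ fun k _ => (continuous_stair n k).continuousOn]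
  calc cfc (∑ k ∈ range (2 * n + 1), stair n k) y = cfc (fun t => (n : ℝ) - t) y := by
        refine cfc_congr fun t ht => ?_
        rw [Finset.sum_apply, sum_range_stair n ((spectrum.norm_le_norm_of_mem ht).trans hn)]
    _ = algebraMap ℝ B n - y := by rw [cfc_sub _ _ y, cfc_const _ y, cfc_id' ℝ y]

lemma Finset.sum_range_succ_le_sum_add_of_le_succ {M : Type*} [AddCommMonoid M] [PartialOrder M]
    [IsOrderedAddMonoid M] {p q : ℕ → M} {c : M} (m : ℕ) (h : ∀ k, q k ≤ p (k + 1))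
    (hq : q m ≤ c) (hp : 0 ≤ p 0) :
    ∑ k ∈ range (m + 1), q k ≤ ∑ k ∈ range (m + 1), p k + c :=
  calc ∑ k ∈ range (m + 1), q k
      = ∑ k ∈ range m, q k + q m := sum_range_succ _ m
    _ ≤ ∑ k ∈ range m, p (k + 1) + p 0 + c := by
        grw [sum_le_sum fun k _ => h k, hq, ← hp, add_zero]
    _ = ∑ k ∈ range (m + 1), p k + c := by rw [sum_range_succ']

lemma le_of_mul_eq_self {R : Type*} [Semiring R] [PartialOrder R] [StarRing R]
    [StarOrderedRing R] {p q : R} (hp : IsSelfAdjoint p) (hpp : p * p ≤ p) (hq : q ≤ 1)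
    (hpq : p * q = q) (hqp : q * p = q) : q ≤ p :=
  calc q = star p * q * p := by rw [hp.star_eq, hpq, hqp]
    _ ≤ star p * 1 * p := star_left_conjugate_le_conjugate hq p
    _ = p * p := by rw [hp.star_eq, mul_one]
    _ ≤ p := hpp

/-- Only meaningful for self-adjoint `a`, `b`: otherwise `cfc` returns junk `0`. -/
def CfcOrthogonal {B : Type*} [CStarAlgebra B] (a b : B) : Prop :=
  ∀ f g : ℝ → ℝ, Continuous f → Continuous g → (∀ t, f t * g t = 0) → cfc f a * cfc g b = 0

namespace CfcOrthogonal

variable {B : Type*} [CStarAlgebra B] {a b : B}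

lemma symm (h : CfcOrthogonal a b) : CfcOrthogonal b a := fun f g hf hg hfg => by
  have hgf := h g f hg hf fun t => by rw [mul_comm, hfg]
  simpa only [star_mul, (cfc_predicate g a).star_eq, (cfc_predicate f b).star_eq, star_zero]
    using congrArg star hgf

lemma smul (h : CfcOrthogonal a b) (ha : IsSelfAdjoint a) (hb : IsSelfAdjoint b) (r : ℝ) :
    CfcOrthogonal (r • a) (r • b) := fun f g hf hg hfg => by
  rw [← cfc_comp_smul r f a, ← cfc_comp_smul r g b]
  exact h _ _ (by fun_prop) (by fun_prop) fun t => hfg (r • t)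

section Order

variable [PartialOrder B] [StarOrderedRing B]

lemma cfc_stair_le_cfc_stair_succ (h : CfcOrthogonal a b) (ha : IsSelfAdjoint a) (n k : ℕ) :
    cfc (stair n k) b ≤ cfc (stair n (k + 1)) a := by
  have horth := h _ _ (by fun_prop) (continuous_stair n k) (one_sub_stair_succ_mul_stair n k)
  rw [cfc_sub (fun _ => 1) (stair n (k + 1)) a, cfc_const_one ℝ a, sub_mul, one_mul,
    sub_eq_zero] at horth
  refine le_of_mul_eq_self (cfc_predicate _ a) ?_ ?_ horth.symm ?_
  · rw [← cfc_mul _ _ a]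
    refine cfc_mono fun t _ => ?_
    have h0 := clamp01_nonneg (k + 1 - n - t)
    have h1 := clamp01_le_one (k + 1 - n - t)
    simp only [stair]; push_cast; nlinarith
  · exact cfc_le_one _ _ fun t _ => clamp01_le_one _
  · simpa only [star_mul, (cfc_predicate (stair n (k + 1)) a).star_eq,
      (cfc_predicate (stair n k) b).star_eq] using (congrArg star horth).symm

lemma le_add_one (h : CfcOrthogonal a b) (ha : IsSelfAdjoint a) (hb : IsSelfAdjoint b) :
    a ≤ b + 1 := by
  obtain ⟨n, hna, hnb⟩ : ∃ n : ℕ, ‖a‖ ≤ n ∧ ‖b‖ ≤ n :=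
    ⟨⌈max ‖a‖ ‖b‖⌉₊, (le_max_left _ _).trans (Nat.le_ceil _),
      (le_max_right _ _).trans (Nat.le_ceil _)⟩
  have hsum := sum_range_succ_le_sum_add_of_le_succ (p := fun k => cfc (stair n k) a)
    (q := fun k => cfc (stair n k) b) (2 * n)
    (h.cfc_stair_le_cfc_stair_succ ha n) (cfc_le_one _ b fun t _ => clamp01_le_one _)
    (cfc_nonneg fun t _ => clamp01_nonneg _)
  rw [sum_range_cfc_stair hb hnb, sum_range_cfc_stair ha hna] at hsum
  calc a = algebraMap ℝ B n - (algebraMap ℝ B n - a) := (sub_sub_cancel _ _).symm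
    _ ≤ algebraMap ℝ B n - (algebraMap ℝ B n - b - 1) := by
        grw [sub_le_iff_le_add.mpr hsum]
    _ = b + 1 := by abel

lemma le (h : CfcOrthogonal a b) (ha : IsSelfAdjoint a) (hb : IsSelfAdjoint b) : a ≤ b := by
  have hle : ∀ ε : ℝ, 0 < ε → a - b ≤ algebraMap ℝ B ε := fun ε hε => by
    have := smul_le_smul_of_nonneg_left ((h.smul ha hb ε⁻¹).le_add_one
      ((IsSelfAdjoint.all ε⁻¹).smul ha) ((IsSelfAdjoint.all ε⁻¹).smul hb)) hε.le
    rwa [smul_add, smul_inv_smul₀ hε.ne', smul_inv_smul₀ hε.ne', ← Algebra.algebraMap_eq_smul_one,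
      ← sub_le_iff_le_add'] at this
  have hspec : ∀ t ∈ spectrum ℝ (a - b), t ≤ 0 := fun t ht =>
    le_of_forall_pos_le_add fun ε hε => by
      simpa using (le_algebraMap_iff_spectrum_le (ha.sub hb)).mp (hle ε hε) t ht
  simpa using (le_algebraMap_iff_spectrum_le (r := 0) (ha.sub hb)).mpr hspec

end Order

lemma eq (h : CfcOrthogonal a b) (ha : IsSelfAdjoint a) (hb : IsSelfAdjoint b) : a = b :=
  let _ := CStarAlgebra.spectralOrder B
  have := CStarAlgebra.spectralOrderedRing B
  le_antisymm (h.le ha hb) (h.symm.le hb ha)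

end CfcOrthogonal

open scoped CStarAlgebra in
lemma cfcOrthogonal_apply_of_mul_eq_zero {A B : Type*} [CStarAlgebra A] [CStarAlgebra B] (U V : A →⋆ₐ[ℂ] B)
    (hUV : ∀ a b : A, IsSelfAdjoint a → IsSelfAdjoint b → a * b = 0 → U a * V b = 0)
    {x : A} (hx : IsSelfAdjoint x) : CfcOrthogonal (U x) (V x) := fun f g hf hg hfg => by
  rw [← StarAlgHom.map_cfc U f x, ← StarAlgHom.map_cfc V g x]
  refine hUV _ _ (cfc_predicate f x) (cfc_predicate g x) ?_
  rw [← cfc_mul f g x]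
  simp only [hfg, cfc_const_zero]

/-- if `U, V` are unital *-homomorphisms between unital C*-algebras and
the pair `(U,V)` is orthogonality preserving on `A_sa` (i.e. for self-adjoint `a, b`
with `ab = 0` one has `U(a) V(b)* = V(b)* U(a) = 0`), then `U = V`. -/
theorem unital_starAlgHom_pair_op_eq
    {A B : Type*} [CStarAlgebra A] [CStarAlgebra B] (U V : A →⋆ₐ[ℂ] B)
    (hOP : ∀ a b : A, IsSelfAdjoint a → IsSelfAdjoint b → a * b = 0 →
      U a * star (V b) = 0 ∧ star (V b) * U a = 0) :
    U = V := by
  have hUV : ∀ a b : A, IsSelfAdjoint a → IsSelfAdjoint b → a * b = 0 → U a * V b = 0 :=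
    fun a b ha hb hab => by simpa only [(hb.map V).star_eq] using (hOP a b ha hb hab).1
  have hsa : ∀ x : A, IsSelfAdjoint x → U x = V x := fun x hx =>
    (cfcOrthogonal_apply_of_mul_eq_zero U V hUV hx).eq (hx.map U) (hx.map V)
  ext a
  rw [← realPart_add_I_smul_imaginaryPart a, map_add, map_add, map_smul, map_smul,
    hsa _ (realPart a).2, hsa _ (imaginaryPart a).2]
end

section
/- Let f : B_A(0, ϱ) → B be a holomorphic map between a C*-algebra A and a complex Banach space B whose Taylor series at zero, f = Σ_{k≥0} P_k with P_k a k-homogeneous continuous polynomial, converges uniformly on U = B_A(0, δ). Then f is orthogonally additive on U (i.e., f(a+b) = f(a) + f(b) whenever a, b, a+b ∈ U and a ⊥ b) if and only if every P_k is orthogonally additive on A and P_0 = 0. -/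
/-!
If `a ⊥ b` then `z • a ⊥ z • b` for every `z : ℂ`, so orthogonal additivity of `f` on `U`,
together with the homogeneity `P k (z • x) = z ^ k • P k x`, says that the power series
`∑ z ^ k • (P k (a + b) - P k a - P k b)` sums to `0` for all small `z`. By the identity principle
for power series all its coefficients vanish; for `a = b = 0` this gives `P 0 = 0`. Conversely,
termwise orthogonal additivity passes to the limit of the partial sums.
-/

open Filter Finset Topology

theorem Ortho.smul {R A : Type*} [CommSemiring R] [StarRing R] [NonUnitalSemiring A] [StarRing A]
    [Module R A] [StarModule R A] [IsScalarTower R A A] [SMulCommClass R A A]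
    {a b : A} (hab : Ortho a b) (r : R) : Ortho (r • a) (r • b) := by
  simp only [Ortho, star_smul, smul_mul_smul_comm, hab.1, hab.2, smul_zero, and_self]

theorem ContinuousMultilinearMap.map_smul_diag {𝕜 E F : Type*} [CommSemiring 𝕜]
    [AddCommMonoid E] [Module 𝕜 E] [TopologicalSpace E] [AddCommMonoid F] [Module 𝕜 F]
    [TopologicalSpace F] {k : ℕ} (Q : ContinuousMultilinearMap 𝕜 (fun _ : Fin k => E) F)
    (z : 𝕜) (x : E) : Q (fun _ => z • x) = z ^ k • Q (fun _ => x) := by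
  simpa using Q.map_smul_univ (fun _ => z) (fun _ => x)

theorem tendsto_zero_of_tendsto_sum_range {G : Type*} [AddCommGroup G] [TopologicalSpace G]
    [IsTopologicalAddGroup G] {u : ℕ → G} {s : G}
    (h : Tendsto (fun N => ∑ k ∈ range N, u k) atTop (𝓝 s)) : Tendsto u atTop (𝓝 0) := by
  simpa [sum_range_succ] using ((tendsto_add_atTop_iff_nat 1).mpr h).sub h

section PowerSeries

variable {𝕜 E : Type*} [NontriviallyNormedField 𝕜] [NormedAddCommGroup E] [NormedSpace 𝕜 E]

/-- The terms of the series are bounded at some `z₀ ≠ 0`, so it has positive radius of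
convergence and is then the power series at `0` of the zero function. -/
theorem eq_zero_of_tendsto_sum_pow_smul {c : ℕ → E} {ε : ℝ} (hε : 0 < ε)
    (h : ∀ z : 𝕜, ‖z‖ < ε → Tendsto (fun N => ∑ k ∈ range N, z ^ k • c k) atTop (𝓝 0)) :
    c = 0 := by
  obtain ⟨z₀, hz₀, hz₀ε⟩ := NormedField.exists_norm_lt 𝕜 hε
  let p : FormalMultilinearSeries 𝕜 𝕜 E :=
    fun k => ContinuousMultilinearMap.mkPiRing 𝕜 (Fin k) (c k)
  have hp : ∀ k (z : 𝕜), p k (fun _ => z) = z ^ k • c k := by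
    simp [p, ContinuousMultilinearMap.mkPiRing_apply]
  obtain ⟨C, hC⟩ := (tendsto_zero_of_tendsto_sum_range (h z₀ hz₀ε)).norm.bddAbove_range
  have hradius : (‖z₀‖₊ : ENNReal) ≤ p.radius := p.le_radius_of_bound C fun k => by
    simpa [p, ContinuousMultilinearMap.norm_mkPiRing, norm_smul, norm_pow, mul_comm]
      using hC ⟨k, rfl⟩
  have hzero : HasFPowerSeriesOnBall 0 p 0 ‖z₀‖₊ :=
    { r_le := hradius
      r_pos := by simpa using hz₀
      hasSum := fun {y} hy => by
        have hy' : ‖y‖ < ‖z₀‖ := by simpa using hy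
        rw [hasSum_iff_tendsto_nat_of_summable_norm
          (p.summable_norm_apply (Metric.eball_subset_eball hradius hy))]
        simpa [hp] using h y (hy'.trans hz₀ε) }
  funext k
  simpa [hp] using congrArg (fun q : FormalMultilinearSeries 𝕜 𝕜 E => q k (fun _ => 1))
    hzero.hasFPowerSeriesAt.eq_zero

end PowerSeries

section HomogeneousExpansion

variable {𝕜 E F : Type*} [NontriviallyNormedField 𝕜] [NormedAddCommGroup E] [NormedSpace 𝕜 E]
  [NormedAddCommGroup F] [NormedSpace 𝕜 F] {f : E → F} {P : ℕ → E → F} {δ : ℝ}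

theorem map_add_of_forall_smul_map_add
    (hhom : ∀ k (z : 𝕜) x, P k (z • x) = z ^ k • P k x)
    (hsum : ∀ x ∈ Metric.ball (0 : E) δ,
      Tendsto (fun N => ∑ k ∈ range N, P k x) atTop (𝓝 (f x)))
    (hδ : 0 < δ) {a b : E}
    (hadd : ∀ z : 𝕜, z • a ∈ Metric.ball 0 δ → z • b ∈ Metric.ball 0 δ →
      z • (a + b) ∈ Metric.ball 0 δ → f (z • (a + b)) = f (z • a) + f (z • b))
    (k : ℕ) : P k (a + b) = P k a + P k b := by
  set M := ‖a‖ + ‖b‖ + 1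
  have hM : 0 < M := by positivity
  have hsmul_mem : ∀ {z : 𝕜} {x : E}, ‖z‖ < δ / M → ‖x‖ ≤ M → z • x ∈ Metric.ball 0 δ :=
    fun {z x} hz hx => by
      rw [mem_ball_zero_iff, norm_smul]
      calc ‖z‖ * ‖x‖ ≤ ‖z‖ * M := by gcongr
        _ < δ / M * M := by gcongr
        _ = δ := div_mul_cancel₀ δ hM.ne'
  have hnorms : ‖a‖ ≤ M ∧ ‖b‖ ≤ M ∧ ‖a + b‖ ≤ M := by
    refine ⟨?_, ?_, (norm_add_le a b).trans ?_⟩ <;> simp only [M] <;>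
      linarith [norm_nonneg a, norm_nonneg b]
  have hcoeff := eq_zero_of_tendsto_sum_pow_smul (c := fun k => P k (a + b) - P k a - P k b)
    (ε := δ / M) (by positivity) fun z hz => by
      have ha := hsmul_mem hz hnorms.1
      have hb := hsmul_mem hz hnorms.2.1
      have hab := hsmul_mem hz hnorms.2.2
      have hlim := ((hsum _ hab).sub (hsum _ ha)).sub (hsum _ hb)
      rw [hadd z ha hb hab, add_sub_cancel_left, sub_self] at hlim
      simpa only [hhom, smul_sub, sum_sub_distrib] using hlim
  simpa [sub_sub, sub_eq_zero] using congrFun hcoeff k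

end HomogeneousExpansion

theorem orthogonally_additive_iff_components_general
    {A B : Type*} [NonUnitalCStarAlgebra A] [NormedAddCommGroup B] [NormedSpace ℂ B]
    (δ : ℝ) (hδ : 0 < δ) (f : A → B)
    (P : ℕ → A → B)
    (hP : ∀ k, ∃ Q : ContinuousMultilinearMap ℂ (fun _ : Fin k => A) B,
      ∀ x : A, P k x = Q (fun _ => x))
    (hconv : TendstoUniformlyOn (fun N x => ∑ k ∈ Finset.range (N + 1), P k x) f
      atTop (Metric.ball 0 δ)) :
    (∀ a b : A, a ∈ Metric.ball (0 : A) δ → b ∈ Metric.ball (0 : A) δ →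
        a + b ∈ Metric.ball (0 : A) δ → Ortho a b → f (a + b) = f a + f b) ↔
      ((∀ k, ∀ a b : A, Ortho a b → P k (a + b) = P k a + P k b) ∧
        (∀ x : A, P 0 x = 0)) := by
  have hhom : ∀ k (z : ℂ) x, P k (z • x) = z ^ k • P k x := fun k z x => by
    obtain ⟨Q, hQ⟩ := hP k
    rw [hQ, hQ, Q.map_smul_diag]
  have hsum : ∀ x ∈ Metric.ball (0 : A) δ,
      Tendsto (fun N => ∑ k ∈ range N, P k x) atTop (𝓝 (f x)) :=
    fun x hx => (tendsto_add_atTop_iff_nat 1).mp (hconv.tendsto_at hx)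
  constructor
  · intro hf
    have hPadd : ∀ k, ∀ a b : A, Ortho a b → P k (a + b) = P k a + P k b :=
      fun k a b hab => map_add_of_forall_smul_map_add hhom hsum hδ
        (fun z ha hb hab' => by rw [smul_add] at hab' ⊢; exact hf _ _ ha hb hab' (hab.smul z)) k
    have hP00 : P 0 0 = 0 := by simpa using hPadd 0 0 0 ⟨by simp, by simp⟩
    exact ⟨hPadd, fun x => by simpa [hP00] using (hhom 0 0 x).symm⟩
  · rintro ⟨hPadd, -⟩ a b ha hb hab hO
    refine tendsto_nhds_unique (hsum _ hab) ?_
    simpa only [hPadd _ a b hO, sum_add_distrib] using (hsum a ha).add (hsum b hb)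

/-- let `f : B_A(0,ϱ) → B` be holomorphic, with Taylor series at zero
`f = Σ P_k` (each `P_k` a continuous `k`-homogeneous polynomial) converging uniformly
on `U = B_A(0,δ)`. Then `f` is orthogonally additive on `U` iff every `P_k` is
orthogonally additive on `A` and `P₀ = 0`. -/
theorem orthogonally_additive_iff_components
    {A B : Type*} [NonUnitalCStarAlgebra A] [NormedAddCommGroup B] [NormedSpace ℂ B]
    (ϱ δ : ℝ) (hδ : 0 < δ) (hδϱ : δ ≤ ϱ) (f : A → B)
    (hf : DifferentiableOn ℂ f (Metric.ball 0 ϱ))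
    (P : ℕ → A → B)
    (hP : ∀ k, ∃ Q : ContinuousMultilinearMap ℂ (fun _ : Fin k => A) B,
      ∀ x : A, P k x = Q (fun _ => x))
    (hconv : TendstoUniformlyOn (fun N x => ∑ k ∈ Finset.range (N + 1), P k x) f
      atTop (Metric.ball 0 δ)) :
    (∀ a b : A, a ∈ Metric.ball (0 : A) δ → b ∈ Metric.ball (0 : A) δ →
        a + b ∈ Metric.ball (0 : A) δ → Ortho a b → f (a + b) = f a + f b) ↔
      ((∀ k, ∀ a b : A, Ortho a b → P k (a + b) = P k a + P k b) ∧
        (∀ x : A, P 0 x = 0)) :=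
  orthogonally_additive_iff_components_general δ hδ f P hP hconv
end

section
/- Let f : B_A(0, ϱ) → B be a holomorphic map between C*-algebras whose Taylor series at zero, f = Σ_{k≥0} P_k, converges uniformly on U = B_A(0, δ). Then f is orthogonality preserving on U (a ⊥ b in U implies f(a) ⊥ f(b)) if and only if P_0 = 0 and the pair (P_n, P_m) is orthogonality preserving on A for all n, m ≥ 1. -/
/-!
By homogeneity of the `P k`, the partial sums give `f (z • a) = ∑ zᵏ • P k a` for small complex
`z`. Scaling preserves orthogonality, so `f (s • a) ⊥ f (t • b)` for all small `s, t`; expanding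
both sides and applying the identity theorem for power series, first in `t` and then in `s`,
every product `P n a * star (P m b)` and `star (P m b) * P n a` vanishes. Since `P 0` is
constant this gives `P 0 x ⊥ P 0 x`, which forces `P 0 x = 0` in a C*-algebra. Conversely, the
partial sums are then orthogonal term by term, and orthogonality passes to the limit.
-/

open Filter

open Topology

theorem Ortho.smul_s15 {R A : Type*} [Monoid R] [StarMul R] [NonUnitalNonAssocSemiring A]
    [StarAddMonoid A] [DistribMulAction R A] [StarModule R A] [IsScalarTower R A A]
    [SMulCommClass R A A] {a b : A} (hab : Ortho a b) (s t : R) : Ortho (s • a) (t • b) := by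
  simp only [Ortho, star_smul, smul_mul_assoc, mul_smul_comm, hab.1, hab.2, smul_zero, and_self]

theorem Ortho.sum {ι κ A : Type*} [NonUnitalNonAssocSemiring A] [StarAddMonoid A]
    {s : Finset ι} {t : Finset κ} {u : ι → A} {v : κ → A}
    (h : ∀ i ∈ s, ∀ j ∈ t, Ortho (u i) (v j)) : Ortho (∑ i ∈ s, u i) (∑ j ∈ t, v j) := by
  simp only [Ortho, star_sum, Finset.sum_mul, Finset.mul_sum]
  exact ⟨Finset.sum_eq_zero fun j hj => Finset.sum_eq_zero fun i hi => (h i hi j hj).1,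
    Finset.sum_eq_zero fun i hi => Finset.sum_eq_zero fun j hj => (h i hi j hj).2⟩

theorem Ortho.of_tendsto {ι A : Type*} [Mul A] [Star A] [Zero A] [TopologicalSpace A]
    [T2Space A] [ContinuousMul A] [ContinuousStar A] {l : Filter ι} [l.NeBot] {u v : ι → A}
    {x y : A} (hu : Tendsto u l (𝓝 x)) (hv : Tendsto v l (𝓝 y))
    (h : ∀ᶠ i in l, Ortho (u i) (v i)) : Ortho x y :=
  ⟨tendsto_nhds_unique (hu.mul hv.star)
      (tendsto_const_nhds.congr' (h.mono fun _ hi => hi.1.symm)),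
    tendsto_nhds_unique (hv.star.mul hu)
      (tendsto_const_nhds.congr' (h.mono fun _ hi => hi.2.symm))⟩

theorem Ortho.eq_zero_of_self {A : Type*} [NonUnitalNormedRing A] [StarRing A] [CStarRing A]
    {a : A} (h : Ortho a a) : a = 0 :=
  (CStarRing.mul_star_self_eq_zero_iff a).mp h.1

theorem ContinuousMultilinearMap.map_const_smul {R M N : Type*} [CommSemiring R]
    [AddCommMonoid M] [Module R M] [TopologicalSpace M] [AddCommMonoid N] [Module R N]
    [TopologicalSpace N] {k : ℕ} (Q : ContinuousMultilinearMap R (fun _ : Fin k => M) N)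
    (s : R) (x : M) : (Q fun _ => s • x) = s ^ k • Q fun _ => x := by
  simpa using Q.map_smul_univ (fun _ => s) (fun _ => x)

section PowerSeries

variable {𝕜 E : Type*} [NontriviallyNormedField 𝕜] [NormedAddCommGroup E] [NormedSpace 𝕜 E]

theorem coeff_eq_zero_of_tendsto_sum_pow_smul [CompleteSpace E] {c : ℕ → E} {ε : ℝ}
    (hε : 0 < ε)
    (h : ∀ z : 𝕜, ‖z‖ < ε →
      Tendsto (fun N => ∑ k ∈ Finset.range N, z ^ k • c k) atTop (𝓝 0)) (n : ℕ) :
    c n = 0 := by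
  obtain ⟨w, hw0, hwε⟩ := NormedField.exists_norm_lt 𝕜 hε
  let p : FormalMultilinearSeries 𝕜 𝕜 E := fun k =>
    ContinuousMultilinearMap.mkPiRing 𝕜 (Fin k) (c k)
  have hp : ∀ k (z : 𝕜), (p k fun _ => z) = z ^ k • c k := by
    simp [p, ContinuousMultilinearMap.mkPiRing_apply]
  have hterm : Tendsto (fun k => w ^ k • c k) atTop (𝓝 0) := by
    simpa [Finset.sum_range_succ] using
      ((tendsto_add_atTop_iff_nat 1).mpr (h w hwε)).sub (h w hwε)
  have hrad : (‖w‖₊ : ENNReal) ≤ p.radius := p.le_radius_of_tendsto (l := 0) <| by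
    simpa [p, norm_smul, mul_comm] using hterm.norm
  have hsum : p.sum =ᶠ[𝓝 0] 0 := by
    filter_upwards [Metric.ball_mem_nhds (0 : 𝕜) hw0] with z hz
    have hz' : ‖z‖ < ‖w‖ := by simpa using hz
    have hmem : z ∈ Metric.eball (0 : 𝕜) p.radius := by
      refine lt_of_lt_of_le ?_ hrad
      have : ‖z‖₊ < ‖w‖₊ := hz'
      simpa [edist_zero_right] using this
    refine tendsto_nhds_unique ((p.hasSum hmem).tendsto_sum_nat) ?_
    simpa [hp] using h z (hz'.trans hwε)
  have hpos : 0 < p.radius := lt_of_lt_of_le (by simpa using hw0) hrad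
  have hp0 : p = 0 := ((p.hasFPowerSeriesOnBall hpos).hasFPowerSeriesAt.congr hsum).eq_zero
  simpa [hp] using congrArg (fun q : FormalMultilinearSeries 𝕜 𝕜 E => q n fun _ => 1) hp0

theorem tendsto_sum_pow_smul_map {F : Type*} [NormedAddCommGroup F] [NormedSpace 𝕜 F]
    (T : E →L[𝕜] F) {c : ℕ → E} {z : 𝕜} {x : E}
    (h : Tendsto (fun N => ∑ k ∈ Finset.range N, z ^ k • c k) atTop (𝓝 x)) :
    Tendsto (fun N => ∑ k ∈ Finset.range N, z ^ k • T (c k)) atTop (𝓝 (T x)) := by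
  simpa [Function.comp_def, map_sum, map_smul] using (T.continuous.tendsto x).comp h

theorem ContinuousLinearMap.map_coeff_coeff_eq_zero {F G : Type*} [NormedAddCommGroup F]
    [NormedSpace 𝕜 F] [NormedAddCommGroup G] [NormedSpace 𝕜 G] [CompleteSpace G]
    (M : E →L[𝕜] F →L[𝕜] G) {c : ℕ → E} {d : ℕ → F} {g : 𝕜 → E} {h : 𝕜 → F} {ε : ℝ}
    (hε : 0 < ε)
    (hg : ∀ z : 𝕜, ‖z‖ < ε →
      Tendsto (fun N => ∑ k ∈ Finset.range N, z ^ k • c k) atTop (𝓝 (g z)))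
    (hh : ∀ z : 𝕜, ‖z‖ < ε →
      Tendsto (fun N => ∑ k ∈ Finset.range N, z ^ k • d k) atTop (𝓝 (h z)))
    (hM : ∀ s t : 𝕜, ‖s‖ < ε → ‖t‖ < ε → M (g s) (h t) = 0) (n m : ℕ) :
    M (c n) (d m) = 0 := by
  have hgd : ∀ s : 𝕜, ‖s‖ < ε → M (g s) (d m) = 0 := fun s hs =>
    coeff_eq_zero_of_tendsto_sum_pow_smul hε
      (fun t ht => hM s t hs ht ▸ tendsto_sum_pow_smul_map (M (g s)) (hh t ht)) m
  exact coeff_eq_zero_of_tendsto_sum_pow_smul (c := fun k => M (c k) (d m)) hε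
    (fun s hs => hgd s hs ▸ tendsto_sum_pow_smul_map (M.flip (d m)) (hg s hs)) n

end PowerSeries

theorem tendsto_sum_pow_smul_star {𝕜 E : Type*} [RCLike 𝕜] [NormedAddCommGroup E]
    [StarAddMonoid E] [ContinuousStar E] [NormedSpace 𝕜 E] [StarModule 𝕜 E]
    {d : ℕ → E} {z : 𝕜} {x : E}
    (h : Tendsto (fun N => ∑ k ∈ Finset.range N, (starRingEnd 𝕜 z) ^ k • d k) atTop (𝓝 x)) :
    Tendsto (fun N => ∑ k ∈ Finset.range N, z ^ k • star (d k)) atTop (𝓝 (star x)) := by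
  simpa [Function.comp_def, star_sum, star_smul] using (continuous_star.tendsto x).comp h

theorem ortho_apply_of_forall_ortho_on_ball {A B : Type*} [NonUnitalCStarAlgebra A]
    [NonUnitalCStarAlgebra B] {P : ℕ → A → B} {f : A → B} {δ : ℝ} (hδ : 0 < δ)
    (hP : ∀ k (s : ℂ) x, P k (s • x) = s ^ k • P k x)
    (hf : ∀ x ∈ Metric.ball (0 : A) δ,
      Tendsto (fun N => ∑ k ∈ Finset.range N, P k x) atTop (𝓝 (f x)))
    (hop : ∀ a b : A, a ∈ Metric.ball (0 : A) δ → b ∈ Metric.ball (0 : A) δ →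
      Ortho a b → Ortho (f a) (f b))
    {a b : A} (hab : Ortho a b) (n m : ℕ) : Ortho (P n a) (P m b) := by
  set R := ‖a‖ + ‖b‖ + 1
  have hR : 0 < R := by positivity
  set ε := δ / R
  have hε : 0 < ε := div_pos hδ hR
  have hmem : ∀ x : A, ‖x‖ < R → ∀ z : ℂ, ‖z‖ < ε → z • x ∈ Metric.ball (0 : A) δ := by
    intro x hx z hz
    rw [mem_ball_zero_iff, norm_smul]
    calc ‖z‖ * ‖x‖ ≤ ‖z‖ * R := by gcongr
      _ < δ := (lt_div_iff₀ hR).mp hz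
  have ha : ‖a‖ < R := by simp only [R]; linarith [norm_nonneg b]
  have hb : ‖b‖ < R := by simp only [R]; linarith [norm_nonneg a]
  have hser : ∀ x : A, ‖x‖ < R → ∀ z : ℂ, ‖z‖ < ε →
      Tendsto (fun N => ∑ k ∈ Finset.range N, z ^ k • P k x) atTop (𝓝 (f (z • x))) := by
    intro x hx z hz
    simpa only [hP] using hf _ (hmem x hx z hz)
  -- `star` is conjugate-linear, so `b` is scaled by `conj z` to get a power series in `z`.
  have hser_star : ∀ z : ℂ, ‖z‖ < ε →
      Tendsto (fun N => ∑ k ∈ Finset.range N, z ^ k • star (P k b)) atTop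
        (𝓝 (star (f (starRingEnd ℂ z • b)))) := fun z hz =>
    tendsto_sum_pow_smul_star (hser b hb _ (by rwa [RCLike.norm_conj]))
  have hfab : ∀ s t : ℂ, ‖s‖ < ε → ‖t‖ < ε → Ortho (f (s • a)) (f (starRingEnd ℂ t • b)) :=
    fun s t hs ht => hop _ _ (hmem a ha s hs) (hmem b hb _ (by rwa [RCLike.norm_conj]))
      (hab.smul_s15 _ _)
  exact ⟨(ContinuousLinearMap.mul ℂ B).map_coeff_coeff_eq_zero hε (hser a ha) hser_star
      (fun s t hs ht => (hfab s t hs ht).1) n m,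
    (ContinuousLinearMap.mul ℂ B).flip.map_coeff_coeff_eq_zero hε (hser a ha) hser_star
      (fun s t hs ht => (hfab s t hs ht).2) n m⟩

theorem op_iff_pairs_of_components_op_general
    {A B : Type*} [NonUnitalCStarAlgebra A] [NonUnitalCStarAlgebra B]
    (δ : ℝ) (hδ : 0 < δ) (f : A → B)
    (P : ℕ → A → B)
    (hP : ∀ k, ∃ Q : ContinuousMultilinearMap ℂ (fun _ : Fin k => A) B,
      ∀ x : A, P k x = Q (fun _ => x))
    (hconv : TendstoUniformlyOn (fun N x => ∑ k ∈ Finset.range (N + 1), P k x) f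
      atTop (Metric.ball 0 δ)) :
    (∀ a b : A, a ∈ Metric.ball (0 : A) δ → b ∈ Metric.ball (0 : A) δ →
        Ortho a b → Ortho (f a) (f b)) ↔
      ((∀ x : A, P 0 x = 0) ∧
        (∀ n m : ℕ, 1 ≤ n → 1 ≤ m → ∀ a b : A, Ortho a b → Ortho (P n a) (P m b))) := by
  have hhom : ∀ k (s : ℂ) x, P k (s • x) = s ^ k • P k x := fun k s x => by
    obtain ⟨Q, hQ⟩ := hP k
    rw [hQ, hQ, Q.map_const_smul]
  have hlim : ∀ x ∈ Metric.ball (0 : A) δ,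
      Tendsto (fun N => ∑ k ∈ Finset.range N, P k x) atTop (𝓝 (f x)) := fun x hx =>
    (tendsto_add_atTop_iff_nat 1).mp (hconv.tendsto_at hx)
  constructor
  · intro hop
    have hPP := fun a b (hab : Ortho a b) =>
      ortho_apply_of_forall_ortho_on_ball hδ hhom hlim hop hab
    refine ⟨fun x => Ortho.eq_zero_of_self ?_, fun n m _ _ a b hab => hPP a b hab n m⟩
    have hconst : P 0 0 = P 0 x := by simpa using hhom 0 0 x
    simpa [hconst] using hPP x 0 (by simp [Ortho]) 0 0
  · rintro ⟨hP0, hpair⟩ a b ha hb hab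
    refine Ortho.of_tendsto (hlim a ha) (hlim b hb) (Eventually.of_forall fun N =>
      Ortho.sum fun n _ m _ => ?_)
    rcases Nat.eq_zero_or_pos n with rfl | hn
    · simp [Ortho, hP0]
    rcases Nat.eq_zero_or_pos m with rfl | hm
    · simp [Ortho, hP0]
    exact hpair n m hn hm a b hab

/-- let `f : B_A(0,ϱ) → B` be a holomorphic map between C*-algebras whose
Taylor series at zero `f = Σ P_k` converges uniformly on `U = B_A(0,δ)`. Then `f` is
orthogonality preserving on `U` iff `P₀ = 0` and the pair `(P_n, P_m)` is orthogonality
preserving on `A` for all `n, m ≥ 1`. -/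
theorem op_iff_pairs_of_components_op
    {A B : Type*} [NonUnitalCStarAlgebra A] [NonUnitalCStarAlgebra B]
    (ϱ δ : ℝ) (hδ : 0 < δ) (hδϱ : δ ≤ ϱ) (f : A → B)
    (hf : DifferentiableOn ℂ f (Metric.ball 0 ϱ))
    (P : ℕ → A → B)
    (hP : ∀ k, ∃ Q : ContinuousMultilinearMap ℂ (fun _ : Fin k => A) B,
      ∀ x : A, P k x = Q (fun _ => x))
    (hconv : TendstoUniformlyOn (fun N x => ∑ k ∈ Finset.range (N + 1), P k x) f
      atTop (Metric.ball 0 δ)) :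
    (∀ a b : A, a ∈ Metric.ball (0 : A) δ → b ∈ Metric.ball (0 : A) δ →
        Ortho a b → Ortho (f a) (f b)) ↔
      ((∀ x : A, P 0 x = 0) ∧
        (∀ n m : ℕ, 1 ≤ n → 1 ≤ m → ∀ a b : A, Ortho a b → Ortho (P n a) (P m b))) :=
  op_iff_pairs_of_components_op_general δ hδ f P hP hconv
end
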